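/- Let p be an odd prime with p ≡ 3 (mod 4) and n an integer with gcd(n,p)=1. Then ∑_{χ mod p} |G(n,χ;p)|⁴ = (p-1)(3p² - 6p - 1), where G(n,χ;p) = ∑_{a=1}^{p-1} χ(a) e^{2πi n a²/p} and the sum is over all Dirichlet characters χ modulo p. -/

import Mathlib

/-!
Write `ψ(x) = e(x/p)` and `ν = n mod p`. Squaring the Gauss sum turns it into a character sum
`G(χ)² = ∑ᵤ χ(u) S(u)` with `S(u) = ∑_{ab = u} ψ(ν(a² + b²))`, so orthogonality of Dirichlet
characters gives `∑_χ |G(χ)|⁴ = (p - 1) ∑ᵤ |S(u)|²`. Parametrising the solutions of `ab = cd` by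
`(a, b, c, d) = (cx, cy, c, cxy)` makes the phase `-ν c² (x² - 1)(y² - 1)`, and the sum over `c`
is `((-ν(x² - 1)(y² - 1) | p) τ - 1` or `p - 1`, with `τ` the quadratic Gauss sum. The part
proportional to `τ` cancels because `∑ₓ (x² - 1 | p) = 0` when `-1` is a non-residue (substitute
`x ↦ x⁻¹`); what remains is `p` times the number `4(p - 2)` of pairs with `x² = 1` or `y² = 1`,
minus `(p - 1)²`.
-/

open Complex Finset

theorem Fintype.sum_eq_add_sum_units {G₀ M : Type*} [GroupWithZero G₀] [Fintype G₀]
    [DecidableEq G₀] [AddCommMonoid M] (f : G₀ → M) : ∑ a, f a = f 0 + ∑ u : G₀ˣ, f u := by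
  rw [← add_sum_erase _ f (mem_univ 0)]
  congr 1
  refine sum_bij' (fun a ha ↦ Units.mk0 a (mem_erase.mp ha).1) (fun u _ ↦ (u : G₀))
    (by simp) (fun u _ ↦ by simp) (fun _ _ ↦ rfl) (fun _ _ ↦ Units.ext rfl) (fun _ _ ↦ rfl)

theorem MulChar.sum_units_mul_sum_units {M R : Type*} [CommMonoid M] [Fintype Mˣ] [CommRing R]
    (χ : MulChar M R) (f g : Mˣ → R) :
    (∑ a : Mˣ, χ a * f a) * (∑ b : Mˣ, χ b * g b) = ∑ u : Mˣ, χ u * ∑ a, f a * g (a⁻¹ * u) := by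
  rw [sum_mul_sum]
  simp only [mul_sum]
  conv_rhs => rw [sum_comm]
  refine sum_congr rfl fun a _ ↦ ?_
  rw [← Equiv.sum_comp (Equiv.mulLeft a⁻¹) (fun b ↦ χ a * f a * (χ b * g b))]
  refine sum_congr rfl fun u _ ↦ ?_
  have hχ : χ a * χ ↑(a⁻¹ * u) = χ u := by
    rw [← map_mul, ← Units.val_mul, mul_inv_cancel_left]
  rw [Equiv.coe_mulLeft, ← hχ]
  ring

theorem DirichletCharacter.sum_norm_sq_sum_units {n : ℕ} [NeZero n] (f : (ZMod n)ˣ → ℂ) :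
    ∑ χ : DirichletCharacter ℂ n, ‖∑ a : (ZMod n)ˣ, χ a * f a‖ ^ 2 =
      n.totient * ∑ a, ‖f a‖ ^ 2 := by
  have hconj (χ : DirichletCharacter ℂ n) (b : (ZMod n)ˣ) : starRingEnd ℂ (χ b) = χ ↑b⁻¹ := by
    rw [← Complex.star_def, MulChar.star_apply', MulChar.inv_apply, Ring.inverse_unit]
  have horth (a b : (ZMod n)ˣ) :
      ∑ χ : DirichletCharacter ℂ n, χ a * χ ↑b⁻¹ = if a = b then (n.totient : ℂ) else 0 := by
    simp only [← map_mul, ← Units.val_mul, sum_characters_eq, Units.val_eq_one, mul_inv_eq_one]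
  apply Complex.ofReal_injective
  push_cast
  simp only [← Complex.mul_conj', map_sum, map_mul, hconj, sum_mul, mul_sum]
  rw [sum_comm]
  refine sum_congr rfl fun b _ ↦ ?_
  rw [sum_comm]
  have h (a : (ZMod n)ˣ) :
      ∑ χ : DirichletCharacter ℂ n, χ a * f a * (χ ↑b⁻¹ * starRingEnd ℂ (f b)) =
        (if a = b then (n.totient : ℂ) else 0) * (f a * starRingEnd ℂ (f b)) := by
    rw [← horth, sum_mul]
    exact sum_congr rfl fun _ _ ↦ by ring
  simp only [h, ite_mul, zero_mul, sum_ite_eq', mem_univ, if_true]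

theorem sum_norm_sq_sum_mul_apply_inv_mul {G : Type*} [CommGroup G] [Fintype G] (f : G → ℂ) :
    ((∑ u, ‖∑ a, f a * f (a⁻¹ * u)‖ ^ 2 : ℝ) : ℂ) =
      ∑ c, ∑ x, ∑ y, f (c * x) * f (c * y) * starRingEnd ℂ (f c * f (c * x * y)) := by
  push_cast
  simp only [← Complex.mul_conj', map_sum, sum_mul, mul_sum]
  rw [sum_comm]
  refine sum_congr rfl fun c _ ↦ ?_
  rw [sum_comm, ← Equiv.sum_comp (Equiv.mulLeft c)]
  refine sum_congr rfl fun x _ ↦ ?_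
  rw [← Equiv.sum_comp (Equiv.mulLeft (c * x)), ← Equiv.sum_comp (Equiv.mulLeft c)]
  refine sum_congr rfl fun y _ ↦ ?_
  have : c⁻¹ * (c * x * (c * y)) = c * x * y := by
    rw [mul_assoc, inv_mul_cancel_left, mul_left_comm, mul_assoc]
  simp only [Equiv.coe_mulLeft, inv_mul_cancel_left, this]

section FiniteField

variable {F : Type*} [Field F] [Fintype F] [DecidableEq F]

theorem sum_comp_sq_eq_sum_quadraticChar {R : Type*} [CommRing R] (hF : ringChar F ≠ 2)
    (g : F → R) : ∑ a, g (a ^ 2) = ∑ z, ((quadraticChar F z : R) + 1) * g z := by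
  rw [sum_comp g (· ^ 2), sum_subset (subset_univ _) fun z _ hz ↦ ?_]
  · refine sum_congr rfl fun z _ ↦ ?_
    have hcard := quadraticChar_card_sqrts hF z
    rw [Set.toFinset_ofPred] at hcard
    rw [nsmul_eq_mul]
    exact_mod_cast congrArg (fun k : ℤ ↦ (k : R) * g z) hcard
  · rw [filter_false_of_mem fun a _ h ↦ hz (mem_image.mpr ⟨a, mem_univ a, h⟩), card_empty,
      zero_smul]

theorem sum_addChar_mul_sq {R : Type*} [CommRing R] [IsDomain R] (hF : ringChar F ≠ 2)
    {ψ : AddChar F R} (hψ : ψ.IsPrimitive) (u : F) :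
    ∑ a, ψ (u * a ^ 2) = quadraticChar F u *
        gaussSum ((quadraticChar F).ringHomComp (Int.castRingHom R)) ψ +
      if u = 0 then (Fintype.card F : R) else 0 := by
  rw [sum_comp_sq_eq_sum_quadraticChar hF (fun z ↦ ψ (u * z))]
  simp only [add_mul, one_mul, sum_add_distrib]
  congr 1
  · rcases eq_or_ne u 0 with rfl | hu
    · simp only [zero_mul, AddChar.map_zero_eq_one, mul_one, MulChar.map_zero, Int.cast_zero]
      rw [← Int.cast_sum, quadraticChar_sum_zero hF, Int.cast_zero]
    · have := gaussSum_mulShift_eq ((quadraticChar F).ringHomComp (Int.castRingHom R)) ψ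
        (Units.mk0 u hu)
      rw [((quadraticChar_isQuadratic F).comp _).inv] at this
      simpa [gaussSum] using this
  · simpa [mul_comm] using AddChar.sum_mulShift u hψ

theorem sum_units_addChar_mul_sq {R : Type*} [CommRing R] [IsDomain R] (hF : ringChar F ≠ 2)
    {ψ : AddChar F R} (hψ : ψ.IsPrimitive) (u : F) :
    ∑ c : Fˣ, ψ (u * c ^ 2) = quadraticChar F u *
        gaussSum ((quadraticChar F).ringHomComp (Int.castRingHom R)) ψ +
      (if u = 0 then (Fintype.card F : R) else 0) - 1 := by
  have h := Fintype.sum_eq_add_sum_units fun a ↦ ψ (u * a ^ 2)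
  rw [sum_addChar_mul_sq hF hψ, zero_pow two_ne_zero, mul_zero, AddChar.map_zero_eq_one] at h
  linear_combination -h

theorem sum_units_quadraticChar_sq_sub_one (hF : Fintype.card F % 4 = 3) :
    ∑ x : Fˣ, quadraticChar F ((x : F) ^ 2 - 1) = 0 := by
  have hneg : quadraticChar F (-1) = -1 :=
    quadraticChar_neg_one_iff_not_isSquare.mpr (by rw [FiniteField.isSquare_neg_one_iff]; omega)
  have key (x : Fˣ) :
      quadraticChar F ((x⁻¹ : Fˣ) ^ 2 - 1) = -quadraticChar F ((x : F) ^ 2 - 1) := by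
    have h : ((x⁻¹ : Fˣ) : F) ^ 2 - 1 = -1 * ((x⁻¹ : Fˣ) : F) ^ 2 * ((x : F) ^ 2 - 1) := by
      rw [Units.val_inv_eq_inv_val]
      field_simp
      ring
    rw [h, map_mul, map_mul, hneg, quadraticChar_sq_one' (x⁻¹).ne_zero]
    ring
  have := Equiv.sum_comp (Equiv.inv Fˣ) fun x ↦ quadraticChar F ((x : F) ^ 2 - 1)
  simp only [Equiv.inv_apply, key, sum_neg_distrib] at this
  linarith

theorem card_units_sq_eq_one (hF : ringChar F ≠ 2) : #{x : Fˣ | (x : F) ^ 2 = 1} = 2 := by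
  have : ({x : Fˣ | (x : F) ^ 2 = 1} : Finset Fˣ) = {1, -1} := by
    ext x
    simp only [mem_filter, mem_univ, true_and, mem_insert, mem_singleton, sq_eq_one_iff,
      Units.ext_iff, Units.val_one, Units.val_neg]
  rw [this, card_pair]
  intro h
  exact Ring.neg_one_ne_one_of_char_ne_two hF (by simpa [Units.ext_iff] using h.symm)

theorem sum_units_sum_units_ite_sq_eq_one (hF : ringChar F ≠ 2) :
    ∑ x : Fˣ, ∑ y : Fˣ, (if (x : F) ^ 2 = 1 ∨ (y : F) ^ 2 = 1 then 1 else 0 : ℂ) =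
      4 * (Fintype.card F - 2) := by
  set e : Fˣ → ℂ := fun x ↦ if (x : F) ^ 2 = 1 then 1 else 0
  have he : ∑ x, e x = 2 := by
    rw [sum_boole, card_units_sq_eq_one hF, Nat.cast_ofNat]
  have hor (x y : Fˣ) : (if (x : F) ^ 2 = 1 ∨ (y : F) ^ 2 = 1 then 1 else 0 : ℂ) =
      e x + e y - e x * e y := by
    simp only [e]; split_ifs <;> simp_all
  have hcard : (Fintype.card Fˣ : ℂ) = Fintype.card F - 1 := by
    rw [Fintype.card_units, Nat.cast_sub Fintype.card_pos, Nat.cast_one]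
  simp only [hor, sum_add_distrib, sum_sub_distrib, sum_const, card_univ, nsmul_eq_mul,
    ← mul_sum, ← sum_mul, he, hcard]
  ring

theorem sum_units_norm_sq_sum_units_addChar_mul_sq_eq_sum (ψ : AddChar F ℂ) (ν : F) :
    ((∑ u : Fˣ, ‖∑ a : Fˣ, ψ (ν * a ^ 2) * ψ (ν * ((a⁻¹ * u : Fˣ) : F) ^ 2)‖ ^ 2 : ℝ) : ℂ) =
      ∑ x : Fˣ, ∑ y : Fˣ, ∑ c : Fˣ, ψ (-ν * ((x : F) ^ 2 - 1) * ((y : F) ^ 2 - 1) * c ^ 2) := by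
  rw [sum_norm_sq_sum_mul_apply_inv_mul (fun a : Fˣ ↦ ψ (ν * (a : F) ^ 2))]
  conv_rhs => rw [sum_comm_cycle]
  refine sum_congr rfl fun c _ ↦ sum_congr rfl fun x _ ↦ sum_congr rfl fun y _ ↦ ?_
  rw [← AddChar.map_add_eq_mul, ← AddChar.map_add_eq_mul, ← AddChar.map_neg_eq_conj,
    ← AddChar.map_add_eq_mul]
  congr 1
  push_cast
  ring

theorem sum_units_addChar_mul_sq_sub_one_mul_sq_sub_one (hF : Fintype.card F % 4 = 3)
    {ψ : AddChar F ℂ} (hψ : ψ.IsPrimitive) {ν : F} (hν : ν ≠ 0) :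
    ∑ x : Fˣ, ∑ y : Fˣ, ∑ c : Fˣ, ψ (ν * ((x : F) ^ 2 - 1) * ((y : F) ^ 2 - 1) * c ^ 2) =
      3 * Fintype.card F ^ 2 - 6 * Fintype.card F - 1 := by
  have hF2 : ringChar F ≠ 2 := fun h ↦ by
    have := FiniteField.even_card_iff_char_two.mp h
    omega
  have hχ (x : Fˣ) :
      ∑ y : Fˣ, (quadraticChar F (ν * ((x : F) ^ 2 - 1) * ((y : F) ^ 2 - 1)) : ℂ) = 0 := by
    simp only [map_mul _ (ν * _), Int.cast_mul, ← mul_sum, ← Int.cast_sum,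
      sum_units_quadraticChar_sq_sub_one hF, Int.cast_zero, mul_zero]
  have hzero (x y : Fˣ) :
      ν * ((x : F) ^ 2 - 1) * ((y : F) ^ 2 - 1) = 0 ↔ (x : F) ^ 2 = 1 ∨ (y : F) ^ 2 = 1 := by
    simp only [mul_eq_zero, hν, false_or, sub_eq_zero]
  have hcard : (Fintype.card Fˣ : ℂ) = Fintype.card F - 1 := by
    rw [Fintype.card_units, Nat.cast_sub Fintype.card_pos, Nat.cast_one]
  simp only [sum_units_addChar_mul_sq hF2 hψ, sum_sub_distrib, sum_add_distrib, ← sum_mul, hχ,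
    zero_mul, zero_add, hzero]
  simp_rw [← mul_boole _ (Fintype.card F : ℂ)]
  simp only [← mul_sum, sum_units_sum_units_ite_sq_eq_one hF2, sum_const, card_univ,
    nsmul_eq_mul, hcard]
  ring

theorem sum_units_norm_sq_sum_units_addChar_mul_sq (hF : Fintype.card F % 4 = 3)
    {ψ : AddChar F ℂ} (hψ : ψ.IsPrimitive) {ν : F} (hν : ν ≠ 0) :
    ∑ u : Fˣ, ‖∑ a : Fˣ, ψ (ν * a ^ 2) * ψ (ν * ((a⁻¹ * u : Fˣ) : F) ^ 2)‖ ^ 2 =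
      3 * Fintype.card F ^ 2 - 6 * Fintype.card F - 1 := by
  apply Complex.ofReal_injective
  rw [sum_units_norm_sq_sum_units_addChar_mul_sq_eq_sum,
    sum_units_addChar_mul_sq_sub_one_mul_sq_sub_one hF hψ (neg_ne_zero.mpr hν)]
  push_cast
  rfl

end FiniteField

theorem ZMod.intCast_ne_zero_of_gcd_eq_one {m : ℕ} (hm : m ≠ 1) {n : ℤ} (hn : Int.gcd n m = 1) :
    (n : ZMod m) ≠ 0 := by
  rw [Ne, ZMod.intCast_zmod_eq_zero_iff_dvd]
  intro hdvd
  rw [Int.gcd_eq_natAbs_right hdvd, Int.natAbs_natCast] at hn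
  exact hm hn

theorem ZMod.cexp_intCast_mul_val_sq {N : ℕ} [NeZero N] (n : ℤ) (a : ZMod N) :
    exp (2 * Real.pi * I * n * (a.val : ℂ) ^ 2 / N) = ZMod.stdAddChar ((n : ZMod N) * a ^ 2) := by
  have : (n : ZMod N) * a ^ 2 = ((n * a.val ^ 2 : ℤ) : ZMod N) := by
    push_cast
    rw [ZMod.natCast_zmod_val]
  rw [this, ZMod.stdAddChar_coe]
  push_cast
  ring_nf

theorem fourth_power_mean_three_mod_four_general (p : ℕ) [Fact p.Prime]
    (h4 : p % 4 = 3) (n : ℤ) (hn : Int.gcd n p = 1) :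
    ∑ χ : DirichletCharacter ℂ p,
        (‖∑ a : ZMod p, χ a *
          Complex.exp (2 * Real.pi * I * n * (a.val : ℂ) ^ 2 / p)‖) ^ 4
      = ((p : ℝ) - 1) * (3 * (p : ℝ) ^ 2 - 6 * p - 1) := by
  set g : (ZMod p)ˣ → ℂ := fun a ↦ ZMod.stdAddChar ((n : ZMod p) * (a : ZMod p) ^ 2)
    with hg
  have hG (χ : DirichletCharacter ℂ p) :
      ∑ a : ZMod p, χ a * exp (2 * Real.pi * I * n * (a.val : ℂ) ^ 2 / p) =
        ∑ a : (ZMod p)ˣ, χ a * g a := by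
    simp only [Fintype.sum_eq_add_sum_units, MulChar.map_zero, zero_mul, zero_add, hg,
      ZMod.cexp_intCast_mul_val_sq]
  have hν : (n : ZMod p) ≠ 0 :=
    ZMod.intCast_ne_zero_of_gcd_eq_one (Fact.out : p.Prime).one_lt.ne' hn
  calc _ = ∑ χ : DirichletCharacter ℂ p, ‖∑ u : (ZMod p)ˣ, χ u * ∑ a, g a * g (a⁻¹ * u)‖ ^ 2 := by
        refine sum_congr rfl fun χ _ ↦ ?_
        rw [hG, (by norm_num : 4 = 2 * 2), pow_mul, ← norm_pow, sq (∑ a : (ZMod p)ˣ, _),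
          MulChar.sum_units_mul_sum_units]
    _ = (p - 1) * ∑ u : (ZMod p)ˣ, ‖∑ a, g a * g (a⁻¹ * u)‖ ^ 2 := by
        rw [DirichletCharacter.sum_norm_sq_sum_units, Nat.totient_prime Fact.out,
          Nat.cast_pred (Fact.out : p.Prime).pos]
    _ = _ := by
        simp only [hg]
        rw [sum_units_norm_sq_sum_units_addChar_mul_sq (by rwa [ZMod.card])
          (ZMod.isPrimitive_stdAddChar p) hν, ZMod.card]

theorem fourth_power_mean_three_mod_four (p : ℕ) [Fact p.Prime] (hp2 : p ≠ 2)
    (h4 : p % 4 = 3) (n : ℤ) (hn : Int.gcd n p = 1) :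
    ∑ χ : DirichletCharacter ℂ p,
        (‖∑ a : ZMod p, χ a *
          Complex.exp (2 * Real.pi * I * n * (a.val : ℂ) ^ 2 / p)‖) ^ 4
      = ((p : ℝ) - 1) * (3 * (p : ℝ) ^ 2 - 6 * p - 1) :=
  fourth_power_mean_three_mod_four_general p h4 n hn
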